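/- Let d ≥ 1, γ ∈ (0,1), a, b, λ > 0 with L := 2(a+b-1)-(a²+b²-1)-2ab(1-γ) > 0 and λ > 1/(2dL). Let H : Z^d → [0,1] satisfy H(O) = 1, H(x) = (1/(2d))Σ_{y~x}H(y) for x ≠ O, and H(e_1) = 1 - γ. Define K(x) = H(x) + (2dλL - 1)/(1 + 2dλ(a+b-1)²), and let G_λ be the Z^d × Z^d matrix with G_λ(x,x) = -4aλd and G_λ(x,y) = 2aλ for y ~ x when x ≠ O, G_λ(O,O) = 1 - 4dλ(b-1) - 4dλa + 2dλ(b²-1) + 2dλa², G_λ(O, e_i) = G_λ(O, -e_i) = 4abλ (totaling 4abdλ mass on neighbors by symmetry of K), and G_λ(x,y) = 0 otherwise. Then (G_λ K)(x) = 0 for every x ∈ Z^d. -/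
import Mathlib


open scoped BigOperators

/-- The `i`-th standard basis vector of `ℤ^d`. -/
def eVec (d : ℕ) (i : Fin d) : Fin d → ℤ := fun j => if j = i then 1 else 0

/-- `y` is a nearest neighbor of `x` in `ℤ^d` (ℓ¹-distance one). -/
def IsNbr {d : ℕ} (x y : Fin d → ℤ) : Prop := (∑ i : Fin d, |x i - y i|) = 1

instance {d : ℕ} (x y : Fin d → ℤ) : Decidable (IsNbr x y) := by
  unfold IsNbr; infer_instance

lemma eVec_ne_zero {d : ℕ} (i : Fin d) : eVec d i ≠ 0 := by
  intro h
  have := congrFun h i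
  simp [eVec] at this

lemma isNbr_add {d : ℕ} (x : Fin d → ℤ) (i : Fin d) : IsNbr x (x + eVec d i) := by
  unfold IsNbr
  have h : ∀ j, |x j - (x + eVec d i) j| = if j = i then 1 else 0 := by
    intro j
    simp only [Pi.add_apply, eVec]
    split <;> simp
  rw [Finset.sum_congr rfl fun j _ => h j, Finset.sum_ite_eq']
  simp

lemma isNbr_sub {d : ℕ} (x : Fin d → ℤ) (i : Fin d) : IsNbr x (x - eVec d i) := by
  unfold IsNbr
  have h : ∀ j, |x j - (x - eVec d i) j| = if j = i then 1 else 0 := by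
    intro j
    simp only [Pi.sub_apply, eVec]
    split <;> simp
  rw [Finset.sum_congr rfl fun j _ => h j, Finset.sum_ite_eq']
  simp

lemma isNbr_iff {d : ℕ} (x y : Fin d → ℤ) :
    IsNbr x y ↔ ∃ i, y = x + eVec d i ∨ y = x - eVec d i := by
  constructor
  · intro h
    unfold IsNbr at h
    have hex : ∃ i : Fin d, x i - y i ≠ 0 := by
      by_contra hc
      push_neg at hc
      have : ∑ i : Fin d, |x i - y i| = 0 := by
        apply Finset.sum_eq_zero
        intro j _
        simp [hc j]
      omega
    obtain ⟨i, hi⟩ := hex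
    have h1 : 1 ≤ |x i - y i| := Int.one_le_abs hi
    have hsplit := Finset.add_sum_erase Finset.univ (fun j => |x j - y j|) (Finset.mem_univ i)
    rw [h] at hsplit
    have hrest_nonneg : 0 ≤ ∑ j ∈ Finset.univ.erase i, |x j - y j| :=
      Finset.sum_nonneg fun j _ => abs_nonneg _
    have habs : |x i - y i| = 1 := by linarith
    have hrest : ∑ j ∈ Finset.univ.erase i, |x j - y j| = 0 := by linarith
    have hzero : ∀ j ∈ Finset.univ.erase i, |x j - y j| = 0 :=
      (Finset.sum_eq_zero_iff_of_nonneg fun j _ => abs_nonneg _).mp hrest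
    have hoff : ∀ j, j ≠ i → y j = x j := by
      intro j hj
      have := abs_eq_zero.mp (hzero j (Finset.mem_erase.mpr ⟨hj, Finset.mem_univ j⟩))
      omega
    rcases (abs_eq (by norm_num : (0:ℤ) ≤ 1)).mp habs with hc | hc
    · refine ⟨i, Or.inr ?_⟩
      funext j
      by_cases hj : j = i
      · subst hj
        simp [eVec]
        omega
      · simp [eVec, hj, hoff j hj]
    · refine ⟨i, Or.inl ?_⟩
      funext j
      by_cases hj : j = i
      · subst hj
        simp [eVec]
        omega
      · simp [eVec, hj, hoff j hj]
  · rintro ⟨i, rfl | rfl⟩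
    · exact isNbr_add x i
    · exact isNbr_sub x i

lemma add_eVec_injective {d : ℕ} (x : Fin d → ℤ) :
    Function.Injective (fun i => x + eVec d i) := by
  intro i j hij
  by_contra hne
  have := congrFun hij i
  simp [eVec, hne] at this

lemma sub_eVec_injective {d : ℕ} (x : Fin d → ℤ) :
    Function.Injective (fun i => x - eVec d i) := by
  intro i j hij
  by_contra hne
  have := congrFun hij i
  simp [eVec, hne] at this

lemma add_ne_sub_eVec {d : ℕ} (x : Fin d → ℤ) (i j : Fin d) :
    x + eVec d i ≠ x - eVec d j := by
  intro h
  have := congrFun h i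
  by_cases hij : i = j
  · subst hij; simp [eVec] at this; omega
  · simp [eVec, hij] at this

lemma add_eVec_ne_self {d : ℕ} (x : Fin d → ℤ) (i : Fin d) : x + eVec d i ≠ x := by
  intro h
  have := congrFun h i
  simp [eVec] at this

lemma sub_eVec_ne_self {d : ℕ} (x : Fin d → ℤ) (i : Fin d) : x - eVec d i ≠ x := by
  intro h
  have := congrFun h i
  simp [eVec] at this

lemma sum_mul_add_const {d : ℕ} (f : Fin d → ℝ) (u v : ℝ) :
    (∑ i : Fin d, u * (f i + v)) = u * (∑ i : Fin d, f i) + (d : ℝ) * (u * v) := by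
  calc (∑ i : Fin d, u * (f i + v)) = ∑ i : Fin d, (u * f i + u * v) :=
        Finset.sum_congr rfl fun i _ => by ring
    _ = (∑ i : Fin d, u * f i) + ∑ _i : Fin d, (u * v) := Finset.sum_add_distrib
    _ = u * (∑ i : Fin d, f i) + (d : ℝ) * (u * v) := by
        rw [← Finset.mul_sum, Finset.sum_const, Finset.card_univ, Fintype.card_fin,
          nsmul_eq_mul]

/-- The matrix `G_λ` governing the two-point correlation functions:
for `x ≠ O`, `G_λ(x,x) = -4aλd` and `G_λ(x,y) = 2aλ` for `y ~ x`;
`G_λ(O,O) = 1 - 4dλ(b-1) - 4dλa + 2dλ(b²-1) + 2dλa²`, and `G_λ(O,·)` puts a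
total mass `4abdλ` on the `2d` neighbors `±e_i` of the origin (i.e. `2abλ`
on each of them, by the symmetry of `K`); all other entries vanish. -/
noncomputable def Glam (d : ℕ) (lam a b : ℝ) (x y : Fin d → ℤ) : ℝ :=
  if x = 0 then
    (if y = 0 then
      1 - 4 * d * lam * (b - 1) - 4 * d * lam * a + 2 * d * lam * (b ^ 2 - 1)
        + 2 * d * lam * a ^ 2
     else if IsNbr x y then 2 * a * b * lam else 0)
  else
    (if y = x then -(4 * a * lam * d)
     else if IsNbr x y then 2 * a * lam else 0)

theorem stmt_16 (d : ℕ) (hd : 1 ≤ d) (γ : ℝ) (hγ0 : 0 < γ) (hγ1 : γ < 1)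
    (a b lam : ℝ) (ha : 0 < a) (hb : 0 < b) (hlam : 0 < lam)
    (L : ℝ) (hL : L = 2 * (a + b - 1) - (a ^ 2 + b ^ 2 - 1) - 2 * a * b * (1 - γ))
    (hLpos : 0 < L) (hlamL : 1 / (2 * d * L) < lam)
    (H : (Fin d → ℤ) → ℝ) (hH01 : ∀ x, 0 ≤ H x ∧ H x ≤ 1) (hHO : H 0 = 1)
    (hharm : ∀ x : Fin d → ℤ, x ≠ 0 →
      H x = (1 / (2 * d)) * ∑ i : Fin d, (H (x + eVec d i) + H (x - eVec d i)))
    (hHe : ∀ i : Fin d, H (eVec d i) = 1 - γ ∧ H (-eVec d i) = 1 - γ)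
    (K : (Fin d → ℤ) → ℝ)
    (hK : ∀ x, K x = H x + (2 * d * lam * L - 1) / (1 + 2 * d * lam * (a + b - 1) ^ 2)) :
    ∀ x : Fin d → ℤ, ∑ᶠ y : Fin d → ℤ, Glam d lam a b x y * K y = 0 := by
  classical
  have hd0 : (0:ℝ) < (d:ℝ) := by
    have : 0 < d := hd
    exact_mod_cast this
  have hden : (1 : ℝ) + 2 * d * lam * (a + b - 1) ^ 2 ≠ 0 := by positivity
  intro x
  set S : Finset (Fin d → ℤ) :=
    insert x ((Finset.image (fun i => x + eVec d i) Finset.univ) ∪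
      (Finset.image (fun i => x - eVec d i) Finset.univ)) with hS
  have hsub : Function.support (fun y => Glam d lam a b x y * K y) ⊆ ↑S := by
    intro y hy
    have hG : Glam d lam a b x y ≠ 0 := left_ne_zero_of_mul hy
    have hmem : y = x ∨ IsNbr x y := by
      by_contra hc
      push_neg at hc
      obtain ⟨h1, h2⟩ := hc
      unfold Glam at hG
      by_cases hx0 : x = 0
      · subst hx0
        rw [if_pos rfl, if_neg h1, if_neg h2] at hG
        exact hG rfl
      · rw [if_neg hx0, if_neg h1, if_neg h2] at hG
        exact hG rfl
    rcases hmem with rfl | hnb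
    · exact Finset.mem_coe.mpr (Finset.mem_insert_self _ _)
    · obtain ⟨i, rfl | rfl⟩ := (isNbr_iff x y).mp hnb
      · exact Finset.mem_coe.mpr (Finset.mem_insert_of_mem
          (Finset.mem_union_left _ (Finset.mem_image_of_mem _ (Finset.mem_univ i))))
      · exact Finset.mem_coe.mpr (Finset.mem_insert_of_mem
          (Finset.mem_union_right _ (Finset.mem_image_of_mem _ (Finset.mem_univ i))))
  rw [finsum_eq_finset_sum_of_support_subset _ hsub]
  have hxnot : x ∉ (Finset.image (fun i => x + eVec d i) Finset.univ) ∪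
      (Finset.image (fun i => x - eVec d i) Finset.univ) := by
    simp only [Finset.mem_union, Finset.mem_image, Finset.mem_univ, true_and, not_or,
      not_exists]
    exact ⟨fun i h => add_eVec_ne_self x i h, fun i h => sub_eVec_ne_self x i h⟩
  have hdisj : Disjoint (Finset.image (fun i => x + eVec d i) Finset.univ)
      (Finset.image (fun i => x - eVec d i) Finset.univ) := by
    rw [Finset.disjoint_left]
    rintro z hz1 hz2
    simp only [Finset.mem_image, Finset.mem_univ, true_and] at hz1 hz2
    obtain ⟨i, rfl⟩ := hz1
    obtain ⟨j, hj⟩ := hz2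
    exact add_ne_sub_eVec x i j hj.symm
  rw [hS, Finset.sum_insert hxnot, Finset.sum_union hdisj,
    Finset.sum_image (fun i _ j _ h => add_eVec_injective x h),
    Finset.sum_image (fun i _ j _ h => sub_eVec_injective x h)]
  set c : ℝ := (2 * d * lam * L - 1) / (1 + 2 * d * lam * (a + b - 1) ^ 2) with hc
  by_cases hx0 : x = 0
  · subst hx0
    simp only [zero_add, zero_sub]
    have hGxx : Glam d lam a b 0 0 =
        1 - 4 * d * lam * (b - 1) - 4 * d * lam * a + 2 * d * lam * (b ^ 2 - 1)
          + 2 * d * lam * a ^ 2 := by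
      unfold Glam; rw [if_pos rfl, if_pos rfl]
    have hGadd : ∀ i : Fin d, Glam d lam a b 0 (eVec d i) = 2 * a * b * lam := by
      intro i
      have h2 : IsNbr (0 : Fin d → ℤ) (eVec d i) := by
        have := isNbr_add (0 : Fin d → ℤ) i; rwa [zero_add] at this
      unfold Glam
      rw [if_pos rfl, if_neg (eVec_ne_zero i), if_pos h2]
    have hGsub : ∀ i : Fin d, Glam d lam a b 0 (-eVec d i) = 2 * a * b * lam := by
      intro i
      have h1 : -eVec d i ≠ (0 : Fin d → ℤ) := neg_ne_zero.mpr (eVec_ne_zero i)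
      have h2 : IsNbr (0 : Fin d → ℤ) (-eVec d i) := by
        have := isNbr_sub (0 : Fin d → ℤ) i; rwa [zero_sub] at this
      unfold Glam
      rw [if_pos rfl, if_neg h1, if_pos h2]
    have e1 : (∑ i : Fin d, Glam d lam a b 0 (eVec d i) * K (eVec d i)) =
        (d : ℝ) * (2 * a * b * lam * ((1 - γ) + c)) := by
      calc (∑ i : Fin d, Glam d lam a b 0 (eVec d i) * K (eVec d i))
          = ∑ _i : Fin d, 2 * a * b * lam * ((1 - γ) + c) :=
            Finset.sum_congr rfl fun i _ => by rw [hGadd i, hK, (hHe i).1]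
        _ = (d : ℝ) * (2 * a * b * lam * ((1 - γ) + c)) := by
            rw [Finset.sum_const, Finset.card_univ, Fintype.card_fin, nsmul_eq_mul]
    have e2 : (∑ i : Fin d, Glam d lam a b 0 (-eVec d i) * K (-eVec d i)) =
        (d : ℝ) * (2 * a * b * lam * ((1 - γ) + c)) := by
      calc (∑ i : Fin d, Glam d lam a b 0 (-eVec d i) * K (-eVec d i))
          = ∑ _i : Fin d, 2 * a * b * lam * ((1 - γ) + c) :=
            Finset.sum_congr rfl fun i _ => by rw [hGsub i, hK, (hHe i).2]
        _ = (d : ℝ) * (2 * a * b * lam * ((1 - γ) + c)) := by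
            rw [Finset.sum_const, Finset.card_univ, Fintype.card_fin, nsmul_eq_mul]
    rw [hGxx, hK 0, hHO, e1, e2, hc, hL]
    field_simp
    ring
  · have hGxx : Glam d lam a b x x = -(4 * a * lam * d) := by
      unfold Glam; rw [if_neg hx0, if_pos rfl]
    have hGadd : ∀ i : Fin d, Glam d lam a b x (x + eVec d i) = 2 * a * lam := by
      intro i
      unfold Glam
      rw [if_neg hx0, if_neg (add_eVec_ne_self x i), if_pos (isNbr_add x i)]
    have hGsub : ∀ i : Fin d, Glam d lam a b x (x - eVec d i) = 2 * a * lam := by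
      intro i
      unfold Glam
      rw [if_neg hx0, if_neg (sub_eVec_ne_self x i), if_pos (isNbr_sub x i)]
    have hh := hharm x hx0
    have hS2 : (∑ i : Fin d, H (x + eVec d i)) + (∑ i : Fin d, H (x - eVec d i)) =
        2 * (d : ℝ) * H x := by
      rw [← Finset.sum_add_distrib, hh]
      field_simp
    have e1 : (∑ i : Fin d, Glam d lam a b x (x + eVec d i) * K (x + eVec d i)) =
        2 * a * lam * (∑ i : Fin d, H (x + eVec d i)) + (d : ℝ) * (2 * a * lam * c) := by
      calc (∑ i : Fin d, Glam d lam a b x (x + eVec d i) * K (x + eVec d i))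
          = ∑ i : Fin d, 2 * a * lam * (H (x + eVec d i) + c) :=
            Finset.sum_congr rfl fun i _ => by rw [hGadd i, hK]
        _ = _ := sum_mul_add_const (fun i => H (x + eVec d i)) (2 * a * lam) c
    have e2 : (∑ i : Fin d, Glam d lam a b x (x - eVec d i) * K (x - eVec d i)) =
        2 * a * lam * (∑ i : Fin d, H (x - eVec d i)) + (d : ℝ) * (2 * a * lam * c) := by
      calc (∑ i : Fin d, Glam d lam a b x (x - eVec d i) * K (x - eVec d i))
          = ∑ i : Fin d, 2 * a * lam * (H (x - eVec d i) + c) :=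
            Finset.sum_congr rfl fun i _ => by rw [hGsub i, hK]
        _ = _ := sum_mul_add_const (fun i => H (x - eVec d i)) (2 * a * lam) c
    rw [hGxx, hK x, e1, e2]
    linear_combination (2 * a * lam) * hS2
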